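/- For any indexed forest F, the forest polynomial equals the sum over decreasing labelings ℓ of F of the slide polynomial of the word i_ℓ, where i_ℓ records the ρ_F-values of internal nodes in the order given by ℓ (from |F| down, i.e., following the linear extension): β_F = Σ_{ℓ ∈ Dec(F)} 𝔉(i_ℓ). -/

import Mathlib

/-- Plane binary trees. `leaf` is a leaf, `node l r` an internal node. -/
inductive BT where
  | leaf : BT
  | node : BT → BT → BT
deriving DecidableEq

/-- Number of internal nodes. -/
def BT.size : BT → ℕ
  | .leaf => 0
  | .node l r => l.size + r.size + 1

/-- Multiset of values `ρ_F(v)` (canonical label of the leftmost descendant,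
reached by following left edges) over the internal nodes of a tree whose
inorder canonical labels start at `a`. -/
def BT.rhoMS : BT → ℤ → Multiset ℤ
  | .leaf, _ => 0
  | .node l r, a => a ::ₘ (l.rhoMS a + r.rhoMS (a + l.size + 1))

/-- Multiset of canonical labels of internal nodes whose left child is a leaf
("left support"). -/
def BT.lsuppMS : BT → ℤ → Multiset ℤ
  | .leaf, _ => 0
  | .node l r, a =>
      (if l = BT.leaf then ({a} : Multiset ℤ) else 0) + l.lsuppMS a
        + r.lsuppMS (a + l.size + 1)

/-- The flagged generating polynomial of a binary tree with inorder labels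
starting at `a`, where every label is at least `lo` (lower bound transmitted
from the parent), at most the `ρ`-value of the node, labels weakly increase
down left edges and strictly increase down right edges. The variables are
`x_1, x_2, …` (the variable `X 0` is unused). -/
noncomputable def BT.polyAux : BT → ℤ → ℕ → MvPolynomial ℕ ℚ
  | .leaf, _, _ => 1
  | .node l r, a, lo =>
      ∑ k ∈ Finset.Icc lo a.toNat,
        MvPolynomial.X k * l.polyAux a k * r.polyAux (a + l.size + 1) (k + 1)

/-- The forest polynomial of a single indexed tree with support starting at `a`. -/
noncomputable def BT.poly (t : BT) (a : ℤ) : MvPolynomial ℕ ℚ := t.polyAux a 1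

/-- An indexed forest: a list of binary trees together with the starting points
of their supports, the supports being maximal intervals (consecutive supports
leave a gap of at least one integer). -/
structure IndexedForest where
  trees : List (ℤ × BT)
  nonempty : ∀ p ∈ trees, p.2 ≠ BT.leaf
  gaps : trees.Chain' (fun p q => p.1 + (p.2.size : ℤ) + 1 ≤ q.1)

/-- The support of an indexed forest, as a set of integers. -/
def IndexedForest.Supp (F : IndexedForest) : Set ℤ :=
  {i | ∃ p ∈ F.trees, p.1 ≤ i ∧ i < p.1 + (p.2.size : ℤ)}

/-- The multiset of `ρ_F`-values of all internal nodes of `F`. -/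
def IndexedForest.rhoMS (F : IndexedForest) : Multiset ℤ :=
  (F.trees.map (fun p => p.2.rhoMS p.1)).sum

/-- The `ℕ`-vector `c(F)`: `c_i` counts internal nodes with `ρ_F`-value `i`. -/
def cOf (F : IndexedForest) : ℤ → ℕ := fun i => F.rhoMS.count i

/-- The multiset of left-support labels of `F`. -/
def IndexedForest.lsuppMS (F : IndexedForest) : Multiset ℤ :=
  (F.trees.map (fun p => p.2.lsuppMS p.1)).sum

/-- Forest polynomial of a list of located trees. -/
noncomputable def polyL (ts : List (ℤ × BT)) : MvPolynomial ℕ ℚ :=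
  (ts.map (fun p => p.2.poly p.1)).prod

/-- The forest polynomial of an indexed forest. -/
noncomputable def IndexedForest.poly (F : IndexedForest) : MvPolynomial ℕ ℚ :=
  polyL F.trees

/-- Number of internal nodes of a forest. -/
def IndexedForest.size (F : IndexedForest) : ℕ :=
  (F.trees.map (fun p => p.2.size)).sum

/-- Generic labeled plane binary trees: internal nodes carry a label in `α`. -/
inductive GT (α : Type) where
  | leaf : GT α
  | node : α → GT α → GT α → GT α
deriving DecidableEq

/-- Underlying (unlabeled) shape. -/
def GT.shape {α : Type} : GT α → BT
  | .leaf => BT.leaf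
  | .node _ l r => BT.node l.shape r.shape

/-- Number of internal nodes. -/
def GT.size {α : Type} : GT α → ℕ
  | .leaf => 0
  | .node _ l r => l.size + r.size + 1

/-- Multiset of labels of internal nodes. -/
def GT.labels {α : Type} : GT α → Multiset α
  | .leaf => 0
  | .node k l r => k ::ₘ (l.labels + r.labels)

/-- Relabel a labeled tree. -/
def GT.map {α β : Type} (f : α → β) : GT α → GT β
  | .leaf => .leaf
  | .node k l r => .node (f k) (l.map f) (r.map f)

/-- The root label of a labeled tree (if any) is smaller than `k`. -/
def rootBelow (k : ℕ) : GT ℕ → Prop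
  | .leaf => True
  | .node m _ _ => m < k

/-- A decreasing labeling: labels strictly decrease away from the root. -/
def IsDec : GT ℕ → Prop
  | .leaf => True
  | .node k l r => rootBelow k l ∧ rootBelow k r ∧ IsDec l ∧ IsDec r

/-- Compatible sequences for the slide polynomial of a word `w = i_1⋯i_k`:
positive weakly decreasing sequences `a_1 ≥ ⋯ ≥ a_k` with `a_t ≤ i_t`, strictly
decreasing at positions where the word strictly decreases. -/
def slideSet (w : List ℤ) : Set (List ℕ) :=
  {a | a.length = w.length ∧ (∀ x ∈ a, 1 ≤ x) ∧
    (∀ t, t < w.length → ((a.getD t 0 : ℤ) ≤ w.getD t 0)) ∧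
    ∀ t, t + 1 < w.length →
      (a.getD (t + 1) 0 ≤ a.getD t 0 ∧
        (w.getD (t + 1) 0 < w.getD t 0 → a.getD (t + 1) 0 < a.getD t 0))}

/-- The slide polynomial `𝔉(i_1⋯i_k)`. -/
noncomputable def slide (w : List ℤ) : MvPolynomial ℕ ℚ :=
  ∑ᶠ a ∈ slideSet w, (a.map (fun i => (MvPolynomial.X i : MvPolynomial ℕ ℚ))).prod

/-- List of pairs `(ℓ-label, ρ_F-value)` over internal nodes of a labeled tree
whose inorder canonical labels start at `a`. -/
def GT.rhoPairs : GT ℕ → ℤ → List (ℕ × ℤ)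
  | .leaf, _ => []
  | .node k l r, a => (k, a) :: (l.rhoPairs a ++ r.rhoPairs (a + l.size + 1))

/-- The word `i_ℓ`: `ρ_F`-values read in increasing order of the labels
`1, 2, …, N` of the decreasing labeling. -/
def wordOf (pairs : List (ℕ × ℤ)) (N : ℕ) : List ℤ :=
  (List.range N).map (fun j => ((pairs.find? (fun q => q.1 = j + 1)).getD (0, 0)).2)


/-!
Standardize a flagged filling of `F` (a labeling counted by `β_F`) by listing its nodes by
decreasing value, ties broken by increasing `ρ` and then by position. The rank of a node in this
list is a decreasing labeling `ℓ` (values weakly increase down left edges and strictly down right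
edges), and the values read along the list form a compatible sequence for `i_ℓ`. Conversely, a
decreasing labeling and a compatible sequence for its word give a filling: the node labelled `j`
gets the `j`-th entry. Equal values with equal `ρ` occur only along a left chain, where a
decreasing labeling increases with the position; this makes the two constructions mutually
inverse, and both preserve the monomial.
-/

open MvPolynomial

theorem finsum_mem_finsum_mem_eq_sum {α β M : Type*} [AddCommMonoid M] {D : Set α}
    {S : α → Set β} (P : Finset (α × β)) (hP : ∀ a b, (a, b) ∈ P ↔ a ∈ D ∧ b ∈ S a)
    (f : α → β → M) : ∑ᶠ a ∈ D, ∑ᶠ b ∈ S a, f a b = ∑ x ∈ P, f x.1 x.2 := by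
  rw [← finsum_mem_finset_eq_sum, finsum_mem_finset_product]
  refine finsum_congr fun a => ?_
  by_cases ha : a ∈ D <;> simp [hP, ha]

theorem List.idxOf_lt_idxOf_of_pairwise {α : Type*} [BEq α] [LawfulBEq α] {r : α → α → Prop}
    [Std.Refl r] {S : List α} (hS : S.Pairwise r) {x y : α} (hx : x ∈ S) (hy : y ∈ S)
    (hyx : ¬ r y x) : S.idxOf x < S.idxOf y := by
  have hix := List.idxOf_lt_length_iff.2 hx
  have hiy := List.idxOf_lt_length_iff.2 hy
  by_contra! hle
  rcases hle.lt_or_eq with hlt | heq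
  · have := List.pairwise_iff_getElem.1 hS _ _ hiy hix hlt
    rw [List.getElem_idxOf, List.getElem_idxOf] at this
    exact hyx this
  · have hxy : x = y := by
      rw [← List.getElem_idxOf hix, ← List.getElem_idxOf hiy]
      simp only [heq]
    subst hxy
    exact hyx (refl x)

theorem List.Nodup.map_idxOf {α : Type*} [BEq α] [LawfulBEq α] {S : List α} (hS : S.Nodup) :
    S.map S.idxOf = List.range S.length :=
  List.ext_getElem (by simp) fun n h _ => by simp [hS.idxOf_getElem]

theorem wordOf_eq_map_snd {pairs W : List (ℕ × ℤ)} (hperm : pairs.Perm W)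
    (hW : ∀ j (h : j < W.length), W[j].1 = j + 1) :
    wordOf pairs W.length = W.map Prod.snd := by
  refine List.ext_getElem (by simp [wordOf]) fun n _ hn => ?_
  rw [List.length_map] at hn
  obtain ⟨q, hq⟩ : ∃ q, pairs.find? (fun q => q.1 = n + 1) = some q :=
    Option.isSome_iff_exists.1 (List.find?_isSome.2
      ⟨W[n], hperm.symm.subset (List.getElem_mem hn), by simp [hW n hn]⟩)
  obtain ⟨i, hi, rfl⟩ := List.getElem_of_mem (hperm.subset (List.mem_of_find?_eq_some hq))
  have hin : i = n := by
    have := List.find?_some hq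
    simp only [hW i hi, decide_eq_true_eq] at this
    omega
  subst hin
  simp [wordOf, hq]

namespace GT

variable {α β γ : Type}

/-- The internal nodes of a tree whose support starts at `a`, in inorder, each recorded as
`(label, ρ-value, position)`. -/
def ann : GT α → ℤ → List (α × ℤ × ℤ)
  | .leaf, _ => []
  | .node k l r, a => l.ann a ++ (k, a, a + l.size) :: r.ann (a + l.size + 1)

def relabel (f : α × ℤ × ℤ → β) : GT α → ℤ → GT β
  | .leaf, _ => .leaf
  | .node k l r, a =>
      .node (f (k, a, a + l.size)) (l.relabel f a) (r.relabel f (a + l.size + 1))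

@[simp] theorem size_relabel (f : α × ℤ × ℤ → β) : ∀ (L : GT α) (a : ℤ),
    (L.relabel f a).size = L.size
  | .leaf, _ => rfl
  | .node _ l r, a => by simp [relabel, size, size_relabel f l, size_relabel f r]

@[simp] theorem shape_relabel (f : α × ℤ × ℤ → β) : ∀ (L : GT α) (a : ℤ),
    (L.relabel f a).shape = L.shape
  | .leaf, _ => rfl
  | .node _ l r, a => by simp [relabel, shape, shape_relabel f l, shape_relabel f r]

@[simp] theorem size_shape : ∀ L : GT α, L.shape.size = L.size
  | .leaf => rfl
  | .node _ l r => by simp [shape, size, BT.size, size_shape l, size_shape r]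

@[simp] theorem length_ann : ∀ (L : GT α) (a : ℤ), (L.ann a).length = L.size
  | .leaf, _ => rfl
  | .node _ l r, a => by simp [ann, size, length_ann l, length_ann r]; omega

theorem ann_relabel (f : α × ℤ × ℤ → β) : ∀ (L : GT α) (a : ℤ),
    (L.relabel f a).ann a = (L.ann a).map fun x => (f x, x.2)
  | .leaf, _ => rfl
  | .node _ l r, a => by simp [relabel, ann, ann_relabel f l, ann_relabel f r]

theorem relabel_relabel (f : α × ℤ × ℤ → β) (g : β × ℤ × ℤ → γ) : ∀ (L : GT α) (a : ℤ),
    (L.relabel f a).relabel g a = L.relabel (fun x => g (f x, x.2)) a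
  | .leaf, _ => rfl
  | .node _ l r, a => by simp [relabel, relabel_relabel f g l, relabel_relabel f g r]

theorem relabel_congr {f g : α × ℤ × ℤ → β} : ∀ {L : GT α} {a : ℤ},
    (∀ x ∈ L.ann a, f x = g x) → L.relabel f a = L.relabel g a
  | .leaf, _, _ => rfl
  | .node _ l r, a, h => by
      simp only [relabel, node.injEq]
      exact ⟨h _ (by simp [ann]), relabel_congr fun x hx => h x (by simp [ann, hx]),
        relabel_congr fun x hx => h x (by simp [ann, hx])⟩

theorem relabel_fst : ∀ (L : GT α) (a : ℤ), L.relabel Prod.fst a = L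
  | .leaf, _ => rfl
  | .node _ l r, a => by simp [relabel, relabel_fst l, relabel_fst r]

theorem labels_eq_ann : ∀ (L : GT α) (a : ℤ), L.labels = ((L.ann a).map Prod.fst : Multiset α)
  | .leaf, _ => rfl
  | .node k l r, a => by
      simp only [labels, ann, List.map_append, List.map_cons, ← Multiset.coe_add,
        ← Multiset.cons_coe, labels_eq_ann l a, labels_eq_ann r (a + l.size + 1),
        Multiset.add_cons]

theorem rhoPairs_perm : ∀ (L : GT ℕ) (a : ℤ),
    (L.rhoPairs a).Perm ((L.ann a).map fun x => (x.1, x.2.1))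
  | .leaf, _ => .refl _
  | .node k l r, a => by
      simp only [rhoPairs, ann, List.map_append, List.map_cons]
      exact ((rhoPairs_perm l a).append (rhoPairs_perm r _)).cons _ |>.trans List.perm_middle.symm

theorem ann_bounds : ∀ {L : GT α} {a : ℤ}, ∀ x ∈ L.ann a,
    a ≤ x.2.1 ∧ x.2.1 ≤ x.2.2 ∧ x.2.2 < a + L.size
  | .leaf, _ => by simp [ann]
  | .node k l r, a => by
      intro x hx
      simp only [ann, List.mem_append, List.mem_cons] at hx
      rcases hx with hx | rfl | hx
      · have := ann_bounds x hx; simp only [size]; omega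
      · simp only [size]; omega
      · have := ann_bounds x hx; simp only [size]; omega

theorem ann_pairwise_pos_lt : ∀ (L : GT α) (a : ℤ),
    (L.ann a).Pairwise fun x y => x.2.2 < y.2.2
  | .leaf, _ => by simp [ann]
  | .node k l r, a => by
      simp only [ann, List.pairwise_append, List.pairwise_cons, List.mem_cons]
      refine ⟨ann_pairwise_pos_lt l a,
        ⟨fun y hy => by have := ann_bounds y hy; omega, ann_pairwise_pos_lt r _⟩, ?_⟩
      rintro x hx y (rfl | hy)
      · have := ann_bounds x hx; dsimp only; omega
      · have := ann_bounds x hx; have := ann_bounds y hy; omega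

end GT

section Forest

variable {α β γ : Type}

def annF (Ls : List (GT α)) (ts : List (ℤ × BT)) : List (α × ℤ × ℤ) :=
  (List.zipWith (fun L p => L.ann p.1) Ls ts).flatten

def relabelF (f : α × ℤ × ℤ → β) (Ls : List (GT α)) (ts : List (ℤ × BT)) : List (GT β) :=
  List.zipWith (fun L p => L.relabel f p.1) Ls ts

def HasShapes (Ls : List (GT α)) (ts : List (ℤ × BT)) : Prop :=
  List.Forall₂ (fun L p => L.shape = p.2) Ls ts

@[simp] theorem annF_nil_left (ts : List (ℤ × BT)) : annF ([] : List (GT α)) ts = [] := rfl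

@[simp] theorem annF_cons (L : GT α) (Ls : List (GT α)) (p : ℤ × BT) (ts : List (ℤ × BT)) :
    annF (L :: Ls) (p :: ts) = L.ann p.1 ++ annF Ls ts := rfl

@[simp] theorem relabelF_cons (f : α × ℤ × ℤ → β) (L : GT α) (Ls : List (GT α)) (p : ℤ × BT)
    (ts : List (ℤ × BT)) : relabelF f (L :: Ls) (p :: ts) = L.relabel f p.1 :: relabelF f Ls ts :=
  rfl

theorem annF_relabelF (f : α × ℤ × ℤ → β) :
    ∀ (Ls : List (GT α)) (ts : List (ℤ × BT)),
      annF (relabelF f Ls ts) ts = (annF Ls ts).map fun x => (f x, x.2)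
  | [], _ => rfl
  | _ :: _, [] => rfl
  | L :: Ls, p :: ts => by
      simp [GT.ann_relabel, annF_relabelF f Ls ts]

theorem relabelF_relabelF (f : α × ℤ × ℤ → β) (g : β × ℤ × ℤ → γ) :
    ∀ (Ls : List (GT α)) (ts : List (ℤ × BT)),
      relabelF g (relabelF f Ls ts) ts = relabelF (fun x => g (f x, x.2)) Ls ts
  | [], _ => rfl
  | _ :: _, [] => rfl
  | L :: Ls, p :: ts => by
      simp [GT.relabel_relabel, relabelF_relabelF f g Ls ts]

theorem relabelF_congr {f g : α × ℤ × ℤ → β} :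
    ∀ {Ls : List (GT α)} {ts : List (ℤ × BT)},
      (∀ x ∈ annF Ls ts, f x = g x) → relabelF f Ls ts = relabelF g Ls ts
  | [], _, _ => rfl
  | _ :: _, [], _ => rfl
  | L :: Ls, p :: ts, h => by
      simp only [annF_cons, List.mem_append] at h
      simp only [relabelF_cons, List.cons.injEq]
      exact ⟨GT.relabel_congr fun x hx => h x (.inl hx),
        relabelF_congr fun x hx => h x (.inr hx)⟩

theorem relabelF_fst : ∀ {Ls : List (GT α)} {ts : List (ℤ × BT)},
    Ls.length = ts.length → relabelF Prod.fst Ls ts = Ls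
  | [], _, _ => rfl
  | L :: Ls, p :: ts, h => by
      simp only [relabelF_cons, GT.relabel_fst, List.cons.injEq, true_and]
      exact relabelF_fst (by simpa using h)

theorem forall_mem_annF {R : GT α → ℤ × BT → Prop} {P : α × ℤ × ℤ → Prop} :
    ∀ {Ls : List (GT α)} {ts : List (ℤ × BT)}, List.Forall₂ R Ls ts →
      (∀ L p, p ∈ ts → R L p → ∀ x ∈ L.ann p.1, P x) → ∀ x ∈ annF Ls ts, P x
  | [], [], _, _ => by simp
  | L :: Ls, p :: ts, h, hR => by
      rcases List.forall₂_cons.1 h with ⟨h₁, h₂⟩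
      simp only [annF_cons, List.mem_append]
      rintro x (hx | hx)
      · exact hR L p List.mem_cons_self h₁ x hx
      · exact forall_mem_annF h₂ (fun L p hp => hR L p (List.mem_cons_of_mem _ hp)) x hx

theorem forall₂_relabelF {R : GT α → ℤ × BT → Prop} {Q : GT β → ℤ × BT → Prop}
    (f : α × ℤ × ℤ → β) :
    ∀ {Ls : List (GT α)} {ts : List (ℤ × BT)}, List.Forall₂ R Ls ts →
      (∀ L p, R L p → (∀ x ∈ L.ann p.1, x ∈ annF Ls ts) → Q (L.relabel f p.1) p) →
      List.Forall₂ Q (relabelF f Ls ts) ts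
  | [], [], _, _ => .nil
  | L :: Ls, p :: ts, h, hQ => by
      rcases List.forall₂_cons.1 h with ⟨h₁, h₂⟩
      refine .cons (hQ L p h₁ fun x hx => by simp [hx]) (forall₂_relabelF f h₂ ?_)
      exact fun L' p' hR hsub => hQ L' p' hR fun x hx => by simp [hsub x hx]

theorem HasShapes.relabelF {Ls : List (GT α)} {ts : List (ℤ × BT)} (h : HasShapes Ls ts)
    (f : α × ℤ × ℤ → β) : HasShapes (relabelF f Ls ts) ts :=
  forall₂_relabelF f h fun L p hL _ => by rw [GT.shape_relabel, hL]

theorem HasShapes.length_annF : ∀ {Ls : List (GT α)} {ts : List (ℤ × BT)}, HasShapes Ls ts →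
    (annF Ls ts).length = (ts.map fun p => p.2.size).sum
  | [], [], _ => rfl
  | L :: Ls, p :: ts, h => by
      obtain ⟨h₁, h₂⟩ : L.shape = p.2 ∧ HasShapes Ls ts := List.forall₂_cons.1 h
      simp [← h₁, h₂.length_annF]

theorem HasShapes.labels_eq_annF : ∀ {Ls : List (GT α)} {ts : List (ℤ × BT)}, HasShapes Ls ts →
    (Ls.map GT.labels).sum = ((annF Ls ts).map Prod.fst : Multiset α)
  | [], [], _ => rfl
  | L :: Ls, p :: ts, h => by
      simp [GT.labels_eq_ann L p.1, HasShapes.labels_eq_annF (List.forall₂_cons.1 h).2]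

theorem rhoPairs_flatten_perm : ∀ (Ls : List (GT ℕ)) (ts : List (ℤ × BT)),
    ((List.zipWith (fun L p => L.rhoPairs p.1) Ls ts).flatten).Perm
      ((annF Ls ts).map fun x => (x.1, x.2.1))
  | [], _ => .refl _
  | _ :: _, [] => .refl _
  | L :: Ls, p :: ts => by
      simpa using (GT.rhoPairs_perm L p.1).append (rhoPairs_flatten_perm Ls ts)

theorem HasShapes.bounds {Ls : List (GT α)} {ts : List (ℤ × BT)} (h : HasShapes Ls ts) :
    ∀ x ∈ annF Ls ts, ∃ p ∈ ts, p.1 ≤ x.2.1 ∧ x.2.1 ≤ x.2.2 ∧ x.2.2 < p.1 + p.2.size := by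
  refine forall_mem_annF h fun L p hp hL x hx => ⟨p, hp, ?_⟩
  rw [← hL, GT.size_shape]
  exact GT.ann_bounds x hx

def SupportsOrdered (ts : List (ℤ × BT)) : Prop :=
  ts.Pairwise fun p q => p.1 + (p.2.size : ℤ) ≤ q.1

theorem HasShapes.pos_lt_rho {L : GT α} {p : ℤ × BT} {Ls : List (GT α)} {ts : List (ℤ × BT)}
    (hL : L.shape = p.2) (h : HasShapes Ls ts) (hp : ∀ q ∈ ts, p.1 + p.2.size ≤ q.1) :
    ∀ x ∈ L.ann p.1, ∀ y ∈ annF Ls ts, x.2.2 < y.2.1 := by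
  intro x hx y hy
  obtain ⟨q, hq, hyq⟩ := h.bounds y hy
  have hx' := GT.ann_bounds x hx
  rw [← GT.size_shape, hL] at hx'
  have := hp q hq
  omega

theorem HasShapes.pairwise_pos_lt : ∀ {Ls : List (GT α)} {ts : List (ℤ × BT)}, HasShapes Ls ts →
    SupportsOrdered ts →
    (annF Ls ts).Pairwise fun x y => x.2.2 < y.2.2
  | [], [], _, _ => .nil
  | L :: Ls, p :: ts, h, hts => by
      obtain ⟨h₁, h₂⟩ : L.shape = p.2 ∧ HasShapes Ls ts := List.forall₂_cons.1 h
      rw [SupportsOrdered, List.pairwise_cons] at hts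
      rw [annF_cons]
      have hlt := HasShapes.pos_lt_rho h₁ h₂ hts.1
      refine List.pairwise_append.2 ⟨GT.ann_pairwise_pos_lt L p.1,
        HasShapes.pairwise_pos_lt h₂ hts.2, fun x hx y hy => ?_⟩
      obtain ⟨q, -, hq⟩ := h₂.bounds y hy
      exact (hlt x hx y hy).trans_le hq.2.1

theorem HasShapes.nodup_annF {Ls : List (GT α)} {ts : List (ℤ × BT)} (h : HasShapes Ls ts)
    (hts : SupportsOrdered ts) : (annF Ls ts).Nodup :=
  (h.pairwise_pos_lt hts).imp fun hxy hxy' => (hxy' ▸ hxy).false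

end Forest

theorem IndexedForest.supportsOrdered (F : IndexedForest) : SupportsOrdered F.trees := by
  have : Trans (fun p q : ℤ × BT => p.1 + (p.2.size : ℤ) + 1 ≤ q.1)
      (fun p q : ℤ × BT => p.1 + (p.2.size : ℤ) + 1 ≤ q.1)
      (fun p q : ℤ × BT => p.1 + (p.2.size : ℤ) + 1 ≤ q.1) := ⟨fun h₁ h₂ => by omega⟩
  exact F.gaps.pairwise.imp fun h => by omega

def stdKey (x : ℕ × ℤ × ℤ) : ℕᵒᵈ ×ₗ ℤ ×ₗ ℤ := toLex (OrderDual.toDual x.1, toLex x.2)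

def StdLE (x y : ℕ × ℤ × ℤ) : Prop := stdKey x ≤ stdKey y

theorem stdKey_injective : Function.Injective stdKey := by
  intro x y h
  simp only [stdKey, toLex_inj, Prod.mk.injEq, OrderDual.toDual_inj] at h
  exact Prod.ext h.1 h.2

instance : DecidableRel StdLE := fun x y => inferInstanceAs (Decidable (stdKey x ≤ stdKey y))
instance : Std.Total StdLE := ⟨fun x y => le_total (stdKey x) (stdKey y)⟩
instance : IsTrans _ StdLE := ⟨fun _ _ _ => le_trans⟩
instance : Std.Antisymm StdLE := ⟨fun _ _ h h' => stdKey_injective (le_antisymm h h')⟩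

theorem stdLE_iff {x y : ℕ × ℤ × ℤ} : StdLE x y ↔
    y.1 ≤ x.1 ∧ (x.1 = y.1 → x.2.1 ≤ y.2.1 ∧ (x.2.1 = y.2.1 → x.2.2 ≤ y.2.2)) := by
  simp [StdLE, stdKey, Prod.Lex.toLex_le_toLex']

theorem stdKey_lt_iff {x y : ℕ × ℤ × ℤ} : stdKey x < stdKey y ↔
    y.1 ≤ x.1 ∧ (x.1 = y.1 → x.2.1 ≤ y.2.1 ∧ (x.2.1 = y.2.1 → x.2.2 < y.2.2)) := by
  simp [stdKey, Prod.Lex.toLex_lt_toLex']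

def IsFlagged : GT ℕ → ℤ → ℕ → Prop
  | .leaf, _, _ => True
  | .node k l r, a, lo =>
      lo ≤ k ∧ k ≤ a.toNat ∧ IsFlagged l a k ∧ IsFlagged r (a + l.size + 1) (k + 1)

def fillings : BT → ℤ → ℕ → Finset (GT ℕ)
  | .leaf, _, _ => {.leaf}
  | .node l r, a, lo =>
      (Finset.Icc lo a.toNat).biUnion fun k =>
        ((fillings l a k) ×ˢ (fillings r (a + l.size + 1) (k + 1))).image
          fun g => .node k g.1 g.2

theorem mem_fillings : ∀ {t : BT} {a : ℤ} {lo : ℕ} {G : GT ℕ},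
    G ∈ fillings t a lo ↔ G.shape = t ∧ IsFlagged G a lo
  | .leaf, _, _, .leaf => by simp [fillings, GT.shape, IsFlagged]
  | .leaf, _, _, .node .. => by simp [fillings, GT.shape]
  | .node .., _, _, .leaf => by simp [fillings, GT.shape]
  | .node l r, a, lo, .node k gl gr => by
      simp only [fillings, Finset.mem_biUnion, Finset.mem_image, Finset.mem_product,
        Finset.mem_Icc, Prod.exists, GT.node.injEq, GT.shape, BT.node.injEq, IsFlagged,
        mem_fillings]
      constructor
      · rintro ⟨k, hk, gl, gr, ⟨⟨rfl, hl⟩, rfl, hr⟩, rfl, rfl, rfl⟩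
        exact ⟨⟨rfl, rfl⟩, hk.1, hk.2, hl, by rwa [← GT.size_shape gl]⟩
      · rintro ⟨⟨rfl, rfl⟩, hk₁, hk₂, hl, hr⟩
        exact ⟨k, ⟨hk₁, hk₂⟩, gl, gr, ⟨⟨rfl, hl⟩, rfl, by rwa [GT.size_shape]⟩, rfl, rfl, rfl⟩

noncomputable def prodX (s : Multiset ℕ) : MvPolynomial ℕ ℚ := (s.map X).prod

theorem polyAux_eq_sum : ∀ (t : BT) (a : ℤ) (lo : ℕ),
    t.polyAux a lo = ∑ G ∈ fillings t a lo, prodX G.labels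
  | .leaf, _, _ => by simp [BT.polyAux, fillings, prodX, GT.labels]
  | .node l r, a, lo => by
      rw [BT.polyAux, fillings, Finset.sum_biUnion]
      · refine Finset.sum_congr rfl fun k _ => ?_
        rw [Finset.sum_image (by simp), Finset.sum_product, polyAux_eq_sum l, polyAux_eq_sum r,
          mul_assoc, Finset.sum_mul_sum, Finset.mul_sum]
        refine Finset.sum_congr rfl fun gl _ => ?_
        rw [Finset.mul_sum]
        refine Finset.sum_congr rfl fun gr _ => ?_
        simp [prodX, GT.labels]
      · intro k₁ _ k₂ _ hne
        simp only [Function.onFun, Finset.disjoint_left, Finset.mem_image]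
        rintro G ⟨g, _, rfl⟩ ⟨g', _, h⟩
        exact hne (GT.node.inj h).1.symm

def IsFlaggedFilling (Gs : List (GT ℕ)) (ts : List (ℤ × BT)) : Prop :=
  List.Forall₂ (fun G p => G.shape = p.2 ∧ IsFlagged G p.1 1) Gs ts

theorem IsFlaggedFilling.hasShapes {Gs : List (GT ℕ)} {ts : List (ℤ × BT)}
    (hGs : IsFlaggedFilling Gs ts) : HasShapes Gs ts :=
  hGs.imp fun _ _ h => h.1

def fillingsF : List (ℤ × BT) → Finset (List (GT ℕ))
  | [] => {[]}
  | p :: ts => ((fillings p.2 p.1 1) ×ˢ fillingsF ts).image fun g => g.1 :: g.2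

theorem mem_fillingsF : ∀ {ts : List (ℤ × BT)} {Gs : List (GT ℕ)},
    Gs ∈ fillingsF ts ↔ IsFlaggedFilling Gs ts
  | [], Gs => by cases Gs <;> simp [fillingsF, IsFlaggedFilling]
  | p :: ts, [] => by simp [fillingsF, IsFlaggedFilling]
  | p :: ts, G :: Gs => by
      simp [fillingsF, IsFlaggedFilling, mem_fillings, mem_fillingsF]

theorem polyL_eq_sum : ∀ ts : List (ℤ × BT),
    polyL ts = ∑ Gs ∈ fillingsF ts, prodX (Gs.map GT.labels).sum
  | [] => by simp [polyL, fillingsF, prodX]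
  | p :: ts => by
      have hts : (ts.map fun p => p.2.poly p.1).prod = polyL ts := rfl
      rw [polyL, List.map_cons, List.prod_cons, hts, polyL_eq_sum ts, BT.poly, polyAux_eq_sum,
        fillingsF, Finset.sum_image (by simp), Finset.sum_product, Finset.sum_mul_sum]
      simp [prodX]

theorem IsFlagged.bounds : ∀ {G : GT ℕ} {a : ℤ} {lo : ℕ}, 1 ≤ lo → IsFlagged G a lo →
    ∀ x ∈ G.ann a, 1 ≤ x.1 ∧ (x.1 : ℤ) ≤ x.2.1
  | .leaf, _, _, _, _ => by simp [GT.ann]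
  | .node k l r, a, lo, hlo, ⟨hk₁, hk₂, hl, hr⟩ => by
      simp only [GT.ann, List.mem_append, List.mem_cons]
      rintro x (hx | rfl | hx)
      · exact hl.bounds (by omega) x hx
      · dsimp only; omega
      · exact hr.bounds (by omega) x hx

theorem IsDec.fst_lt : ∀ {L : GT ℕ} {a : ℤ} {k : ℕ}, IsDec L → rootBelow k L →
    ∀ x ∈ L.ann a, x.1 < k
  | .leaf, _, _, _, _ => by simp [GT.ann]
  | .node k' l r, a, k, ⟨hl, hr, hdl, hdr⟩, (hk : k' < k) => by
      simp only [GT.ann, List.mem_append, List.mem_cons]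
      rintro x (hx | rfl | hx)
      · exact (hdl.fst_lt hl x hx).trans hk
      · exact hk
      · exact (hdr.fst_lt hr x hx).trans hk

/-- Nodes with a common `ρ`-value lie on one left chain, along which a decreasing labeling
increases with the position. -/
theorem IsDec.pos_lt_of_rho_eq : ∀ {L : GT ℕ} {a : ℤ}, IsDec L →
    ∀ x ∈ L.ann a, ∀ y ∈ L.ann a, x.2.1 = y.2.1 → x.1 < y.1 → x.2.2 < y.2.2
  | .leaf, _, _ => by simp [GT.ann]
  | .node k l r, a, ⟨hl, hr, hdl, hdr⟩ => by
      have bl := fun z (hz : z ∈ l.ann a) => GT.ann_bounds z hz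
      have br := fun z (hz : z ∈ r.ann (a + l.size + 1)) => GT.ann_bounds z hz
      simp only [GT.ann, List.mem_append, List.mem_cons]
      rintro x (hx | rfl | hx) y (hy | rfl | hy) hρ hxy
      · exact hdl.pos_lt_of_rho_eq x hx y hy hρ hxy
      · have := bl x hx; dsimp only at hρ ⊢; omega
      · have := bl x hx; have := br y hy; omega
      · have := hdl.fst_lt hl y hy; dsimp only at hxy; omega
      · exact absurd hxy (lt_irrefl _)
      · have := br y hy; dsimp only at hρ; omega
      · have := br x hx; have := bl y hy; omega
      · have := br x hx; dsimp only at hρ; omega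
      · exact hdr.pos_lt_of_rho_eq x hx y hy hρ hxy

theorem pos_lt_of_rho_eq_annF : ∀ {Ls : List (GT ℕ)} {ts : List (ℤ × BT)},
    List.Forall₂ (fun L p => L.shape = p.2 ∧ IsDec L) Ls ts →
    SupportsOrdered ts →
    ∀ x ∈ annF Ls ts, ∀ y ∈ annF Ls ts, x.2.1 = y.2.1 → x.1 < y.1 → x.2.2 < y.2.2
  | [], [], _, _ => by simp
  | L :: Ls, p :: ts, h, hts => by
      obtain ⟨⟨hsh, hdec⟩, h'⟩ := List.forall₂_cons.1 h
      rw [SupportsOrdered, List.pairwise_cons] at hts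
      have hlt := HasShapes.pos_lt_rho hsh (h'.imp fun _ _ h => h.1) hts.1
      simp only [annF_cons, List.mem_append]
      rintro x (hx | hx) y (hy | hy) hρ hxy
      · exact hdec.pos_lt_of_rho_eq x hx y hy hρ hxy
      · have := hlt x hx y hy; have := GT.ann_bounds x hx; omega
      · have := hlt y hy x hx; have := GT.ann_bounds y hy; omega
      · exact pos_lt_of_rho_eq_annF h' hts.2 x hx y hy hρ hxy

theorem IsFlagged.isDec_relabel {f : ℕ × ℤ × ℤ → ℕ} : ∀ {G : GT ℕ} {a : ℤ} {lo : ℕ},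
    IsFlagged G a lo → (∀ x ∈ G.ann a, ∀ y ∈ G.ann a, stdKey x < stdKey y → f x < f y) →
    IsDec (G.relabel f a)
  | .leaf, _, _, _, _ => trivial
  | .node k l r, a, _, ⟨_, _, hl, hr⟩, hf => by
      have hroot : (k, a, a + (l.size : ℤ)) ∈ (GT.node k l r).ann a := by simp [GT.ann]
      have hsl : ∀ x ∈ l.ann a, x ∈ (GT.node k l r).ann a := by simp +contextual [GT.ann]
      have hsr : ∀ x ∈ r.ann (a + l.size + 1), x ∈ (GT.node k l r).ann a := by
        simp +contextual [GT.ann]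
      refine ⟨?_, ?_, hl.isDec_relabel fun x hx y hy => hf x (hsl x hx) y (hsl y hy),
        hr.isDec_relabel fun x hx y hy => hf x (hsr x hx) y (hsr y hy)⟩
      · cases l with
        | leaf => trivial
        | node k' l' r' =>
            refine hf _ (by simp [GT.ann]) _ hroot (stdKey_lt_iff.2 ?_)
            have : k ≤ k' := hl.1
            simp only [GT.size]
            omega
      · cases r with
        | leaf => trivial
        | node k' l' r' =>
            refine hf _ (by simp [GT.ann]) _ hroot (stdKey_lt_iff.2 ?_)
            have : k + 1 ≤ k' := hr.1
            omega

theorem IsDec.isFlagged_relabel {s : ℕ → ℕ} : ∀ {L : GT ℕ} {a : ℤ} {lo : ℕ}, IsDec L →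
    (∀ x ∈ L.ann a, lo ≤ s x.1 ∧ (s x.1 : ℤ) ≤ x.2.1) →
    (∀ x ∈ L.ann a, ∀ y ∈ L.ann a, x.1 < y.1 →
      s y.1 ≤ s x.1 ∧ (y.2.1 < x.2.1 → s y.1 < s x.1)) →
    IsFlagged (L.relabel (fun x => s x.1) a) a lo
  | .leaf, _, _, _, _, _ => trivial
  | .node k l r, a, lo, ⟨hl, hr, hdl, hdr⟩, hb, hs => by
      have hroot : (k, a, a + (l.size : ℤ)) ∈ (GT.node k l r).ann a := by simp [GT.ann]
      have hsl : ∀ x ∈ l.ann a, x ∈ (GT.node k l r).ann a := by simp +contextual [GT.ann]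
      have hsr : ∀ x ∈ r.ann (a + l.size + 1), x ∈ (GT.node k l r).ann a := by
        simp +contextual [GT.ann]
      obtain ⟨hlo, hka⟩ := hb _ hroot
      refine ⟨hlo, by dsimp only at hka ⊢; omega, ?_, ?_⟩
      · refine hdl.isFlagged_relabel (fun x hx => ⟨?_, (hb x (hsl x hx)).2⟩)
          fun x hx y hy => hs x (hsl x hx) y (hsl y hy)
        exact (hs x (hsl x hx) _ hroot (hdl.fst_lt hl x hx)).1
      · rw [GT.size_relabel]
        refine hdr.isFlagged_relabel (fun x hx => ⟨?_, (hb x (hsr x hx)).2⟩)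
          fun x hx y hy => hs x (hsr x hx) y (hsr y hy)
        have := GT.ann_bounds x hx
        exact (hs x (hsr x hx) _ hroot (hdr.fst_lt hr x hx)).2 (by dsimp only; omega)

section SlideSet

variable {w : List ℤ} {a : List ℕ}

theorem getD_antitone_of_mem_slideSet (ha : a ∈ slideSet w) {t s : ℕ} (hts : t ≤ s)
    (hs : s < w.length) : a.getD s 0 ≤ a.getD t 0 := by
  induction s, hts using Nat.le_induction with
  | base => exact le_rfl
  | succ s hts ih => exact (ha.2.2.2 s hs).1.trans (ih (by omega))

theorem word_le_of_mem_slideSet_of_getD_eq (ha : a ∈ slideSet w) {t s : ℕ} (hts : t ≤ s)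
    (hs : s < w.length) (heq : a.getD s 0 = a.getD t 0) : w.getD t 0 ≤ w.getD s 0 := by
  induction s, hts using Nat.le_induction with
  | base => exact le_rfl
  | succ s hts ih =>
      have hst := getD_antitone_of_mem_slideSet ha hts (by omega)
      have hstep := ha.2.2.2 s hs
      have ih := ih (by omega) (by omega)
      by_contra! hlt
      have := hstep.2 (by omega)
      omega

theorem getD_lt_of_mem_slideSet_of_word_lt (ha : a ∈ slideSet w) {t s : ℕ} (hts : t ≤ s)
    (hs : s < w.length) (hw : w.getD s 0 < w.getD t 0) : a.getD s 0 < a.getD t 0 :=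
  (getD_antitone_of_mem_slideSet ha hts hs).lt_of_ne fun h =>
    (word_le_of_mem_slideSet_of_getD_eq ha hts hs h).not_gt hw

end SlideSet

def IsDecLabeling (Ls : List (GT ℕ)) (ts : List (ℤ × BT)) (N : ℕ) : Prop :=
  List.Forall₂ (fun L p => L.shape = p.2 ∧ IsDec L) Ls ts ∧
    (Ls.map GT.labels).sum = (Multiset.range N).map (· + 1)

theorem IsDecLabeling.hasShapes {Ls : List (GT ℕ)} {ts : List (ℤ × BT)} {N : ℕ}
    (hLs : IsDecLabeling Ls ts N) : HasShapes Ls ts :=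
  hLs.1.imp fun _ _ h => h.1

def readingWord (Ls : List (GT ℕ)) (ts : List (ℤ × BT)) (N : ℕ) : List ℤ :=
  wordOf ((List.zipWith (fun L p => L.rhoPairs p.1) Ls ts).flatten) N

theorem readingWord_eq_of_perm {Ls : List (GT ℕ)} {ts : List (ℤ × BT)} {W : List (ℕ × ℤ × ℤ)}
    (hW : W.Perm (annF Ls ts)) (hlab : ∀ j (h : j < W.length), W[j].1 = j + 1) :
    readingWord Ls ts W.length = W.map fun x => x.2.1 := by
  have := wordOf_eq_map_snd ((rhoPairs_flatten_perm Ls ts).trans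
    (hW.map fun x => (x.1, x.2.1)).symm) (by simpa using hlab)
  rw [List.length_map, List.map_map] at this
  exact this

def stdOrder (Gs : List (GT ℕ)) (ts : List (ℤ × BT)) : List (ℕ × ℤ × ℤ) :=
  (annF Gs ts).insertionSort StdLE

def standardize (Gs : List (GT ℕ)) (ts : List (ℤ × BT)) : List (GT ℕ) :=
  relabelF (fun x => (stdOrder Gs ts).idxOf x + 1) Gs ts

def stdValues (Gs : List (GT ℕ)) (ts : List (ℤ × BT)) : List ℕ :=
  (stdOrder Gs ts).map Prod.fst

def destandardize (a : List ℕ) (Ls : List (GT ℕ)) (ts : List (ℤ × BT)) : List (GT ℕ) :=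
  relabelF (fun x => a.getD (x.1 - 1) 0) Ls ts

section Standardize

variable {Gs : List (GT ℕ)} {ts : List (ℤ × BT)}

theorem stdOrder_perm : (stdOrder Gs ts).Perm (annF Gs ts) := List.perm_insertionSort _ _

theorem pairwise_stdOrder : (stdOrder Gs ts).Pairwise StdLE := List.pairwise_insertionSort _ _

theorem IsFlaggedFilling.nodup_stdOrder (hGs : IsFlaggedFilling Gs ts)
    (hts : SupportsOrdered ts) : (stdOrder Gs ts).Nodup :=
  stdOrder_perm.nodup_iff.2 (hGs.hasShapes.nodup_annF hts)

theorem IsFlaggedFilling.isDecLabeling_standardize (hGs : IsFlaggedFilling Gs ts)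
    (hts : SupportsOrdered ts) :
    IsDecLabeling (standardize Gs ts) ts (annF Gs ts).length := by
  set S := stdOrder Gs ts
  refine ⟨forall₂_relabelF _ hGs fun G p hG hsub =>
    ⟨by rw [GT.shape_relabel, hG.1], hG.2.isDec_relabel fun x hx y hy hxy => ?_⟩, ?_⟩
  · have := List.idxOf_lt_idxOf_of_pairwise pairwise_stdOrder
      (stdOrder_perm.symm.subset (hsub x hx)) (stdOrder_perm.symm.subset (hsub y hy))
      (not_le.2 hxy)
    omega
  · have hrank : S.map (fun x => S.idxOf x + 1) = (List.range S.length).map (· + 1) := by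
      rw [← (hGs.nodup_stdOrder hts).map_idxOf, List.map_map]
      rfl
    rw [standardize, HasShapes.labels_eq_annF (hGs.hasShapes.relabelF _), annF_relabelF,
      List.map_map, ← stdOrder_perm.length_eq, Multiset.coe_eq_coe.2 (stdOrder_perm.map _).symm]
    exact congrArg _ hrank

theorem IsFlaggedFilling.readingWord_standardize (hGs : IsFlaggedFilling Gs ts)
    (hts : SupportsOrdered ts) :
    readingWord (standardize Gs ts) ts (annF Gs ts).length =
      (stdOrder Gs ts).map fun x => x.2.1 := by
  have hnd := hGs.nodup_stdOrder hts
  have hW : ((stdOrder Gs ts).map fun x => ((stdOrder Gs ts).idxOf x + 1, x.2)).Perm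
      (annF (standardize Gs ts) ts) := by
    rw [standardize, annF_relabelF]
    exact stdOrder_perm.map _
  have := readingWord_eq_of_perm hW fun j hj => by simp [hnd.idxOf_getElem]
  rw [List.length_map, stdOrder_perm.length_eq, List.map_map] at this
  exact this

theorem IsFlaggedFilling.stdValues_mem_slideSet (hGs : IsFlaggedFilling Gs ts)
    (hts : SupportsOrdered ts) :
    stdValues Gs ts ∈ slideSet (readingWord (standardize Gs ts) ts (annF Gs ts).length) := by
  rw [hGs.readingWord_standardize hts, stdValues]
  have hb : ∀ x ∈ stdOrder Gs ts, 1 ≤ x.1 ∧ (x.1 : ℤ) ≤ x.2.1 := fun x hx =>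
    forall_mem_annF hGs (fun _ _ _ hG => hG.2.bounds le_rfl) x (stdOrder_perm.subset hx)
  refine ⟨by simp, fun x hx => ?_, fun t ht => ?_, fun t ht => ?_⟩
  · obtain ⟨y, hy, rfl⟩ := List.mem_map.1 hx
    exact (hb y hy).1
  · rw [List.length_map] at ht
    simpa [ht] using (hb _ (List.getElem_mem ht)).2
  · rw [List.length_map] at ht
    have hle := stdLE_iff.1 (List.pairwise_iff_getElem.1 pairwise_stdOrder t (t + 1)
      (by omega) ht (by omega))
    simp only [List.getD_eq_getElem?_getD, List.getElem?_map, List.getElem?_eq_getElem ht,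
      List.getElem?_eq_getElem (by omega : t < (stdOrder Gs ts).length), Option.map_some,
      Option.getD_some]
    refine ⟨hle.1, fun hlt => hle.1.lt_of_ne fun heq => ?_⟩
    have := (hle.2 heq.symm).1
    omega

theorem IsFlaggedFilling.destandardize_standardize (hGs : IsFlaggedFilling Gs ts) :
    destandardize (stdValues Gs ts) (standardize Gs ts) ts = Gs := by
  rw [destandardize, standardize, relabelF_relabelF]
  conv_rhs => rw [← relabelF_fst hGs.length_eq]
  refine relabelF_congr fun x hx => ?_
  have hidx := List.idxOf_lt_length_iff.2 (stdOrder_perm.symm.subset hx)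
  simp [stdValues, hidx, List.getElem_idxOf]

theorem IsFlaggedFilling.labels_eq_stdValues (hGs : IsFlaggedFilling Gs ts) :
    (Gs.map GT.labels).sum = (stdValues Gs ts : Multiset ℕ) := by
  rw [hGs.hasShapes.labels_eq_annF, stdValues, Multiset.coe_eq_coe]
  exact (stdOrder_perm.map _).symm

end Standardize

section Destandardize

variable {Ls : List (GT ℕ)} {ts : List (ℤ × BT)} {N : ℕ} {W : List (ℕ × ℤ × ℤ)} {a : List ℕ}

def IsLabelOrder (Ls : List (GT ℕ)) (ts : List (ℤ × BT)) (N : ℕ) (W : List (ℕ × ℤ × ℤ)) :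
    Prop :=
  W.Perm (annF Ls ts) ∧ W.map Prod.fst = (List.range N).map (· + 1)

theorem IsDecLabeling.exists_isLabelOrder (hLs : IsDecLabeling Ls ts N) :
    ∃ W, IsLabelOrder Ls ts N W := by
  refine ⟨(annF Ls ts).mergeSort fun x y => x.1 ≤ y.1, List.mergeSort_perm _ _, ?_⟩
  refine List.Perm.eq_of_pairwise' (r := (· ≤ ·)) ?_ ?_ ?_
  · refine List.pairwise_map.2 ((List.pairwise_mergeSort ?_ ?_ _).imp (by simp))
    · simpa using fun _ _ _ => le_trans
    · simpa using fun x y : ℕ => le_total x y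
  · exact List.pairwise_map.2 (List.pairwise_lt_range.imp fun h => by omega)
  · rw [← Multiset.coe_eq_coe, Multiset.coe_eq_coe.2 ((List.mergeSort_perm _ _).map _),
      ← hLs.hasShapes.labels_eq_annF, hLs.2]
    rfl

theorem IsLabelOrder.getElem_fst (hW : IsLabelOrder Ls ts N W) {j : ℕ} (hj : j < W.length) :
    W[j].1 = j + 1 := by
  have := List.getElem_of_eq hW.2 (by simpa using hj)
  simpa using this

theorem IsLabelOrder.length_eq (hW : IsLabelOrder Ls ts N W) : W.length = N := by
  simpa using congrArg List.length hW.2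

theorem IsLabelOrder.readingWord_eq (hW : IsLabelOrder Ls ts N W) :
    readingWord Ls ts N = W.map fun x => x.2.1 := by
  rw [← hW.length_eq]
  exact readingWord_eq_of_perm hW.1 fun _ hj => hW.getElem_fst hj

theorem isFlaggedFilling_destandardize (hLs : IsDecLabeling Ls ts N)
    (hW : IsLabelOrder Ls ts N W) (ha : a ∈ slideSet (readingWord Ls ts N)) :
    IsFlaggedFilling (destandardize a Ls ts) ts := by
  rw [hW.readingWord_eq] at ha
  have hidx := fun x (hx : x ∈ annF Ls ts) => List.getElem_of_mem (hW.1.symm.subset hx)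
  refine forall₂_relabelF _ hLs.1 fun L p hL hsub => ⟨by rw [GT.shape_relabel, hL.1],
    hL.2.isFlagged_relabel (s := fun t => a.getD (t - 1) 0) (fun x hx => ?_)
      fun x hx y hy hxy => ?_⟩
  · obtain ⟨j, hj, rfl⟩ := hidx x (hsub x hx)
    have hja : j < a.length := by rw [ha.1]; simpa using hj
    rw [hW.getElem_fst hj, Nat.add_sub_cancel, List.getD_eq_getElem _ _ hja]
    refine ⟨ha.2.1 _ (List.getElem_mem hja), ?_⟩
    simpa [hj, hja] using ha.2.2.1 j (by simpa using hj)
  · obtain ⟨i, hi, rfl⟩ := hidx x (hsub x hx)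
    obtain ⟨j, hj, rfl⟩ := hidx y (hsub y hy)
    rw [hW.getElem_fst hi, hW.getElem_fst hj] at hxy ⊢
    simp only [Nat.add_sub_cancel]
    have hjw : j < (W.map fun x => x.2.1).length := by simpa using hj
    refine ⟨getD_antitone_of_mem_slideSet ha (by omega) hjw, fun hρ =>
      getD_lt_of_mem_slideSet_of_word_lt ha (by omega) hjw ?_⟩
    simpa [hi, hj] using hρ

/-- Sorting the substituted nodes returns them in label order: ties in value are broken by `ρ`
because the word cannot descend on a run of equal values, and ties in `ρ` by position because
equal-`ρ` nodes lie on a left chain. -/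
theorem stdOrder_destandardize (hts : SupportsOrdered ts) (hLs : IsDecLabeling Ls ts N)
    (hW : IsLabelOrder Ls ts N W) (ha : a ∈ slideSet (readingWord Ls ts N)) :
    stdOrder (destandardize a Ls ts) ts = W.map fun x => (a.getD (x.1 - 1) 0, x.2) := by
  rw [hW.readingWord_eq] at ha
  rw [stdOrder, destandardize, annF_relabelF]
  refine List.Perm.eq_of_pairwise' (List.pairwise_insertionSort _ _) ?_
    ((List.perm_insertionSort _ _).trans (hW.1.map _).symm)
  refine List.pairwise_iff_getElem.2 fun i j hi hj hij => ?_
  simp only [List.length_map] at hi hj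
  simp only [List.getElem_map, hW.getElem_fst hi, hW.getElem_fst hj, Nat.add_sub_cancel]
  have hjw : j < (W.map fun x => x.2.1).length := by simpa using hj
  refine stdLE_iff.2 ⟨getD_antitone_of_mem_slideSet ha hij.le hjw, fun heq => ⟨?_, fun hρ => ?_⟩⟩
  · simpa [hi, hj] using word_le_of_mem_slideSet_of_getD_eq ha hij.le hjw heq.symm
  · refine (pos_lt_of_rho_eq_annF hLs.1 hts _ (hW.1.subset (List.getElem_mem hi)) _
      (hW.1.subset (List.getElem_mem hj)) hρ ?_).le
    rw [hW.getElem_fst hi, hW.getElem_fst hj]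
    omega

theorem standardize_destandardize (hts : SupportsOrdered ts) (hLs : IsDecLabeling Ls ts N)
    (hW : IsLabelOrder Ls ts N W) (ha : a ∈ slideSet (readingWord Ls ts N)) :
    standardize (destandardize a Ls ts) ts = Ls := by
  set g : ℕ × ℤ × ℤ → ℕ × ℤ × ℤ := fun x => (a.getD (x.1 - 1) 0, x.2)
  have hnd : (W.map g).Nodup := by
    refine List.Nodup.of_map (fun x => x.2.2) ?_
    rw [List.map_map]
    exact ((hW.1.map _).nodup_iff).2 <| List.Pairwise.imp ne_of_lt <|
      List.pairwise_map.2 (hLs.hasShapes.pairwise_pos_lt hts)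
  rw [standardize, stdOrder_destandardize hts hLs hW ha, destandardize, relabelF_relabelF]
  conv_rhs => rw [← relabelF_fst hLs.1.length_eq]
  refine relabelF_congr fun x hx => ?_
  obtain ⟨j, hj, rfl⟩ := List.getElem_of_mem (hW.1.symm.subset hx)
  have e : (a.getD (W[j].1 - 1) 0, W[j].2) = (W.map g)[j]'(by simpa using hj) := by simp [g]
  rw [e, hnd.idxOf_getElem, hW.getElem_fst hj]

theorem stdValues_destandardize (hts : SupportsOrdered ts) (hLs : IsDecLabeling Ls ts N)
    (hW : IsLabelOrder Ls ts N W) (ha : a ∈ slideSet (readingWord Ls ts N)) :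
    stdValues (destandardize a Ls ts) ts = a := by
  have hlen : a.length = N := by rw [ha.1, hW.readingWord_eq, List.length_map, hW.length_eq]
  rw [stdValues, stdOrder_destandardize hts hLs hW ha, List.map_map]
  have : W.map (Prod.fst ∘ fun x => (a.getD (x.1 - 1) 0, x.2)) =
      ((List.range N).map (· + 1)).map fun t => a.getD (t - 1) 0 := by
    rw [← hW.2, List.map_map]
    rfl
  rw [this, List.map_map]
  exact List.ext_getElem (by simp [hlen]) fun n _ h => by simp [h]

end Destandardize

section Bijection

variable {ts : List (ℤ × BT)}

def standardization (ts : List (ℤ × BT)) (Gs : List (GT ℕ)) : List (GT ℕ) × List ℕ :=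
  (standardize Gs ts, stdValues Gs ts)

theorem mem_image_standardization_iff (hts : SupportsOrdered ts) {Ls : List (GT ℕ)}
    {a : List ℕ} :
    (Ls, a) ∈ (fillingsF ts).image (standardization ts) ↔
      IsDecLabeling Ls ts (ts.map fun p => p.2.size).sum ∧
        a ∈ slideSet (readingWord Ls ts (ts.map fun p => p.2.size).sum) := by
  constructor
  · simp only [Finset.mem_image, mem_fillingsF, standardization, Prod.mk.injEq]
    rintro ⟨Gs, hGs, rfl, rfl⟩
    rw [← hGs.hasShapes.length_annF]
    exact ⟨hGs.isDecLabeling_standardize hts, hGs.stdValues_mem_slideSet hts⟩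
  · rintro ⟨hLs, ha⟩
    obtain ⟨W, hW⟩ := hLs.exists_isLabelOrder
    refine Finset.mem_image.2 ⟨destandardize a Ls ts,
      mem_fillingsF.2 (isFlaggedFilling_destandardize hLs hW ha), ?_⟩
    rw [standardization, standardize_destandardize hts hLs hW ha,
      stdValues_destandardize hts hLs hW ha]

theorem injOn_standardization : Set.InjOn (standardization ts) (fillingsF ts) := by
  intro Gs hGs Gs' hGs' he
  simp only [standardization, Prod.mk.injEq] at he
  rw [← (mem_fillingsF.1 hGs).destandardize_standardize, he.1, he.2,
    (mem_fillingsF.1 hGs').destandardize_standardize]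

end Bijection

/-- the slide expansion of forest polynomials:
`β_F = Σ_{ℓ ∈ Dec(F)} 𝔉(i_ℓ)`, where `ℓ` ranges over decreasing labelings of
`F` (labels `1,…,|F|` used bijectively, decreasing away from the roots) and
`i_ℓ` records the `ρ_F`-values of the internal nodes following `ℓ`. -/
theorem forest_poly_slide_expansion (F : IndexedForest) :
    F.poly = ∑ᶠ Ls ∈ {Ls : List (GT ℕ) |
        List.Forall₂ (fun (L : GT ℕ) (p : ℤ × BT) => L.shape = p.2 ∧ IsDec L)
          Ls F.trees ∧
        ((Ls.map GT.labels).sum : Multiset ℕ)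
          = (Multiset.range F.size).map (· + 1)},
      slide (wordOf
        ((List.zipWith (fun (L : GT ℕ) (p : ℤ × BT) => L.rhoPairs p.1)
          Ls F.trees).flatten) F.size) := by
  symm
  calc _ = ∑ x ∈ (fillingsF F.trees).image (standardization F.trees), (x.2.map X).prod :=
        finsum_mem_finsum_mem_eq_sum (D := {Ls | IsDecLabeling Ls F.trees F.size}) _
          (fun _ _ => mem_image_standardization_iff F.supportsOrdered) fun _ a => (a.map X).prod
    _ = F.poly := by
      rw [Finset.sum_image injOn_standardization, IndexedForest.poly, polyL_eq_sum]
      exact Finset.sum_congr rfl fun Gs hGs => by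
        simp [prodX, standardization, (mem_fillingsF.1 hGs).labels_eq_stdValues]
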